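/- Let H = {H_n}_{n∈ℕ} be a universal graph series. For a finite poset P, define Z_{H_n}(P) = Y_{H_n}(G⃗_P), where G⃗_P is the Hasse diagram of P regarded as a DAG. Then the family {Z_{H_n}}_{n∈ℕ} is a complete invariant for finite posets: Z_{H_n}(P₁) = Z_{H_n}(P₂) for all n ∈ ℕ if and only if P₁ and P₂ are isomorphic as posets. -/

import Mathlib

/-- The underlying simple graph of a directed graph with arc relation `A`, obtained by
forgetting the orientations of the arcs. -/
def underlyingGraph {α : Type} (A : α → α → Prop) : SimpleGraph α where
  Adj u v := u ≠ v ∧ (A u v ∨ A v u)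
  symm := by constructor; rintro u v ⟨h, h'⟩; exact ⟨h.symm, h'.symm⟩
  loopless := by constructor; rintro v ⟨h, -⟩; exact h rfl

/-- `w` is the recursive in-degree weight of the DAG with arc relation `A`:
`w v = 1` if `v` has in-degree `0`, and `w v = 1 + max { w u : u → v an arc }`
otherwise. -/
def WeightSpec {α : Type} (A : α → α → Prop) (w : α → ℕ) : Prop :=
  ∀ v : α,
    ((¬ ∃ u, A u v) → w v = 1) ∧
    (∀ u, A u v → w u + 1 ≤ w v) ∧
    ((∃ u, A u v) → ∃ u, A u v ∧ w v = w u + 1)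

/-- The `H`-chromatic function of a finite vertex-weighted graph `(G, w)`, as a formal
power series in variables indexed by the vertices of `H`. -/
noncomputable def chromFun {α β : Type} [Fintype α] (G : SimpleGraph α) (w : α → ℕ)
    (H : SimpleGraph β) : (β →₀ ℕ) → ℕ :=
  fun d => Nat.card {φ : G →g H //
    Finsupp.mapDomain (⇑φ) (Finsupp.equivFunOnFinite.symm w) = d}

/-- A family `{H_n}` of graphs is a universal graph series if every finite simple graph
embeds in some `H_n` as an induced subgraph. -/
def IsUniversalSeries {β : ℕ → Type} (H : ∀ n, SimpleGraph (β n)) : Prop :=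
  ∀ (α : Type) [Fintype α] (G : SimpleGraph α), ∃ n, Nonempty (G ↪g H n)

lemma weight_pos {α : Type} {A : α → α → Prop} {w : α → ℕ} (hw : WeightSpec A w) (v : α) :
    1 ≤ w v := by
  obtain ⟨h1, h2, h3⟩ := hw v
  by_cases h : ∃ u, A u v
  · obtain ⟨u, -, he⟩ := h3 h; omega
  · rw [h1 h]

lemma push_apply {α β : Type} [Fintype α] [DecidableEq β] (f : α → β) (w : α → ℕ) (y : β) :
    Finsupp.mapDomain f (Finsupp.equivFunOnFinite.symm w) y
      = ∑ u ∈ Finset.univ.filter (fun u => f u = y), w u := by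
  rw [Finsupp.mapDomain, Finsupp.sum_apply, Finsupp.sum]
  calc ∑ a ∈ (Finsupp.equivFunOnFinite.symm w).support,
        (Finsupp.single (f a) ((Finsupp.equivFunOnFinite.symm w) a)) y
      = ∑ a ∈ (Finsupp.equivFunOnFinite.symm w).support,
        if f a = y then w a else 0 := by
        refine Finset.sum_congr rfl fun a _ => ?_
        simp [Finsupp.single_apply, eq_comm]
    _ = ∑ a ∈ Finset.univ, if f a = y then w a else 0 := by
        refine Finset.sum_subset (Finset.subset_univ _) fun x _ hx => ?_
        simp only [Finsupp.notMem_support_iff] at hx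
        simp only [Finsupp.coe_equivFunOnFinite_symm] at hx
        simp [hx]
    _ = ∑ u ∈ Finset.univ.filter (fun u => f u = y), w u := (Finset.sum_filter _ _).symm

lemma push_pos_mem {α β : Type} [Fintype α] [DecidableEq β] (f : α → β) (w : α → ℕ)
    (u : α) :
    w u ≤ Finsupp.mapDomain f (Finsupp.equivFunOnFinite.symm w) (f u) := by
  rw [push_apply]
  exact Finset.single_le_sum (fun i _ => Nat.zero_le _)
    (Finset.mem_filter.2 ⟨Finset.mem_univ u, rfl⟩)

lemma exists_push_hom {α β : Type} [Fintype α] [Fintype β] [DecidableEq β]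
    (G₁ : SimpleGraph α) (G₂ : SimpleGraph β)
    (w₁ : α → ℕ) (w₂ : β → ℕ) (h₁ : ∀ u, 1 ≤ w₁ u) (h₂ : ∀ v, 1 ≤ w₂ v)
    {γ : ℕ → Type} (H : ∀ n, SimpleGraph (γ n)) (hH : IsUniversalSeries H)
    (h : ∀ n, chromFun G₁ w₁ (H n) = chromFun G₂ w₂ (H n)) :
    ∃ φ : G₁ →g G₂,
      ∀ x : β, ∑ u ∈ Finset.univ.filter (fun u => φ u = x), w₁ u = w₂ x := by
  classical
  obtain ⟨n, ⟨e⟩⟩ := hH β G₂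
  set d : γ n →₀ ℕ := Finsupp.mapDomain e (Finsupp.equivFunOnFinite.symm w₂) with hd
  have hfin : ∀ {δ : Type} [Fintype δ] (G : SimpleGraph δ) (w : δ → ℕ), (∀ u, 1 ≤ w u) →
      Finite {φ : G →g H n // Finsupp.mapDomain (⇑φ) (Finsupp.equivFunOnFinite.symm w) = d} := by
    intro δ _ G w hw
    have : Function.Injective
        (fun φ : {φ : G →g H n //
            Finsupp.mapDomain (⇑φ) (Finsupp.equivFunOnFinite.symm w) = d} =>
          (fun u : δ => (⟨φ.1 u, by
            have hle := push_pos_mem (⇑φ.1) w u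
            rw [φ.2] at hle
            have := hw u
            rw [Finsupp.mem_support_iff]
            omega⟩ : {y // y ∈ d.support}))) := by
      intro φ ψ hφψ
      ext1
      apply DFunLike.coe_injective
      funext u
      exact congrArg Subtype.val (congrFun hφψ u)
    exact Finite.of_injective _ this
  have hne₂ : Nonempty {φ : G₂ →g H n //
      Finsupp.mapDomain (⇑φ) (Finsupp.equivFunOnFinite.symm w₂) = d} :=
    ⟨⟨e.toHom, rfl⟩⟩
  have hcard₂ : chromFun G₂ w₂ (H n) d ≠ 0 := by
    have := hfin G₂ w₂ h₂
    exact (Nat.card_pos (α := {φ : G₂ →g H n //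
      Finsupp.mapDomain (⇑φ) (Finsupp.equivFunOnFinite.symm w₂) = d})).ne'
  have hcard₁ : chromFun G₁ w₁ (H n) d ≠ 0 := by rw [h n]; exact hcard₂
  have hne₁ : Nonempty {φ : G₁ →g H n //
      Finsupp.mapDomain (⇑φ) (Finsupp.equivFunOnFinite.symm w₁) = d} :=
    (Nat.card_ne_zero.mp hcard₁).1
  obtain ⟨Φ, hΦ⟩ := hne₁
  have hrange : ∀ u : α, ∃ x : β, e x = Φ u := by
    intro u
    have hle := push_pos_mem (⇑Φ) w₁ u
    rw [hΦ] at hle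
    have hmem : Φ u ∈ d.support := by
      rw [Finsupp.mem_support_iff]
      have := h₁ u
      omega
    have := Finsupp.mapDomain_support hmem
    simp only [Finset.mem_image] at this
    obtain ⟨x, -, hx⟩ := this
    exact ⟨x, hx⟩
  choose φ₀ hφ₀ using hrange
  refine ⟨⟨φ₀, ?_⟩, ?_⟩
  · intro a b hab
    have := Φ.map_adj hab
    rw [← hφ₀ a, ← hφ₀ b] at this
    exact e.map_adj_iff.mp this
  · intro x
    have h1 : Finsupp.mapDomain (⇑Φ) (Finsupp.equivFunOnFinite.symm w₁) (e x) = w₂ x := by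
      rw [hΦ, hd, Finsupp.mapDomain_apply e.injective]
      simp
    rw [push_apply] at h1
    rw [← h1]
    refine Finset.sum_congr ?_ fun a _ => rfl
    ext u
    simp only [Finset.mem_filter, Finset.mem_univ, true_and]
    constructor
    · intro hu
      have : Φ u = e (φ₀ u) := (hφ₀ u).symm
      rw [this]
      exact congrArg e hu
    · intro hu
      have : e (φ₀ u) = e x := by rw [hφ₀ u, hu]
      exact e.injective this

lemma push_comp_eq {α β δ : Type} [Fintype α] [Fintype β] [DecidableEq β] [DecidableEq δ]
    (φ : α → β) (θ : β → δ) (w₁ : α → ℕ) (w₂ : β → ℕ)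
    (h : ∀ x, ∑ u ∈ Finset.univ.filter (fun u => φ u = x), w₁ u = w₂ x) (x : δ) :
    ∑ u ∈ Finset.univ.filter (fun u => θ (φ u) = x), w₁ u
      = ∑ v ∈ Finset.univ.filter (fun v => θ v = x), w₂ v := by
  rw [← Finset.sum_fiberwise_of_maps_to (g := φ)
      (t := Finset.univ.filter (fun v => θ v = x))
      (fun u hu => by
        simp only [Finset.mem_filter, Finset.mem_univ, true_and] at hu ⊢
        exact hu)]
  refine Finset.sum_congr rfl fun v hv => ?_
  simp only [Finset.mem_filter, Finset.mem_univ, true_and] at hv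
  rw [← h v]
  refine Finset.sum_congr ?_ fun a _ => rfl
  ext u
  simp only [Finset.filter_filter, Finset.mem_filter, Finset.mem_univ, true_and]
  constructor
  · rintro ⟨-, h2⟩; exact h2
  · intro h2; exact ⟨by rw [h2, hv], h2⟩

lemma push_self_bijective {α : Type} [Fintype α] [DecidableEq α] (σ : α → α) (w : α → ℕ)
    (hpos : ∀ u, 1 ≤ w u)
    (h : ∀ x, ∑ u ∈ Finset.univ.filter (fun u => σ u = x), w u = w x) :
    Function.Bijective σ := by
  have hsurj : Function.Surjective σ := by
    intro x
    have hx := h x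
    have : Finset.univ.filter (fun u => σ u = x) ≠ ∅ := by
      intro hemp
      rw [hemp] at hx
      simp at hx
      have := hpos x
      omega
    obtain ⟨u, hu⟩ := Finset.nonempty_of_ne_empty this
    simp only [Finset.mem_filter, Finset.mem_univ, true_and] at hu
    exact ⟨u, hu⟩
  exact ⟨(Finite.injective_iff_surjective).mpr hsurj, hsurj⟩

lemma hom_iterate {α : Type} {G : SimpleGraph α} (g : G →g G) :
    ∀ k : ℕ, ∃ h : G →g G, ⇑h = (⇑g)^[k] := by
  intro k
  induction k with
  | zero => exact ⟨SimpleGraph.Hom.id, rfl⟩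
  | succ k ih =>
    obtain ⟨h, hh⟩ := ih
    refine ⟨g.comp h, ?_⟩
    rw [Function.iterate_succ']
    funext u
    simp [hh]

lemma exists_weighted_iso {α β : Type} [Fintype α] [Fintype β] [DecidableEq α] [DecidableEq β]
    {G₁ : SimpleGraph α} {G₂ : SimpleGraph β} {w₁ : α → ℕ} {w₂ : β → ℕ}
    (h₁ : ∀ u, 1 ≤ w₁ u) (h₂ : ∀ v, 1 ≤ w₂ v)
    (φ : G₁ →g G₂) (θ : G₂ →g G₁)
    (hφ : ∀ x, ∑ u ∈ Finset.univ.filter (fun u => φ u = x), w₁ u = w₂ x)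
    (hθ : ∀ x, ∑ v ∈ Finset.univ.filter (fun v => θ v = x), w₂ v = w₁ x) :
    ∃ (f : G₁ →g G₂) (g : G₂ →g G₁),
      (∀ u, g (f u) = u) ∧ (∀ x, f (g x) = x) ∧ (∀ u, w₂ (f u) = w₁ u) := by
  have hgf : ∀ x, ∑ u ∈ Finset.univ.filter (fun u => θ (φ u) = x), w₁ u = w₁ x := by
    intro x
    rw [push_comp_eq (⇑φ) (⇑θ) w₁ w₂ hφ x]
    exact hθ x
  have hfg : ∀ x, ∑ v ∈ Finset.univ.filter (fun v => φ (θ v) = x), w₂ v = w₂ x := by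
    intro x
    rw [push_comp_eq (⇑θ) (⇑φ) w₂ w₁ hθ x]
    exact hφ x
  have hbij₁ : Function.Bijective (⇑θ ∘ ⇑φ) := push_self_bijective _ w₁ h₁ hgf
  have hbij₂ : Function.Bijective (⇑φ ∘ ⇑θ) := push_self_bijective _ w₂ h₂ hfg
  have hφinj : Function.Injective ⇑φ := by
    intro a b hab
    apply hbij₁.1
    show θ (φ a) = θ (φ b)
    rw [hab]
  have hφsurj : Function.Surjective ⇑φ := by
    intro x
    obtain ⟨y, hy⟩ := hbij₂.2 x
    exact ⟨θ y, hy⟩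
  -- inverse of θ ∘ φ via iterates
  set g₀ : G₁ →g G₁ := θ.comp φ with hg₀
  have hg₀coe : ⇑g₀ = ⇑θ ∘ ⇑φ := rfl
  set m : ℕ := Fintype.card (Equiv.Perm α) with hm
  have hmpos : 0 < m := Fintype.card_pos
  have hid : (⇑g₀)^[m] = id := by
    have hp : (Equiv.ofBijective (⇑θ ∘ ⇑φ) hbij₁) ^ m = 1 := pow_card_eq_one
    have h7 := congrArg (fun q : Equiv.Perm α => ⇑q) hp
    simp only [Equiv.Perm.coe_pow, Equiv.Perm.coe_one] at h7
    have h8 : ⇑(Equiv.ofBijective (⇑θ ∘ ⇑φ) hbij₁) = ⇑g₀ := rfl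
    rw [h8] at h7
    exact h7
  obtain ⟨hiter, hiter_coe⟩ := hom_iterate g₀ (m - 1)
  have key : ∀ u : α, (⇑g₀)^[m - 1] (g₀ u) = u := by
    intro u
    have h6 : (⇑g₀)^[m - 1] (g₀ u) = (⇑g₀)^[m - 1 + 1] u :=
      (Function.iterate_succ_apply (⇑g₀) (m - 1) u).symm
    rw [h6, Nat.sub_add_cancel hmpos, hid]
    rfl
  have hleft : ∀ u : α, (hiter.comp θ) (φ u) = u := by
    intro u
    have := key u
    rw [hg₀coe] at this
    show hiter (θ (φ u)) = u
    rw [hiter_coe]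
    exact this
  refine ⟨φ, hiter.comp θ, hleft, ?_, ?_⟩
  · intro x
    obtain ⟨u, rfl⟩ := hφsurj x
    rw [hleft u]
  · intro u
    have := hφ (φ u)
    have hfil : Finset.univ.filter (fun u' => φ u' = φ u) = {u} := by
      ext u'
      simp only [Finset.mem_filter, Finset.mem_univ, true_and, Finset.mem_singleton]
      exact ⟨fun h => hφinj h, fun h => by rw [h]⟩
    rw [hfil, Finset.sum_singleton] at this
    omega

section OrderSide
variable {α : Type} [Fintype α] [PartialOrder α]

lemma weightSpec_unique {w w' : α → ℕ}
    (h : WeightSpec (fun u v : α => u ⋖ v) w) (h' : WeightSpec (fun u v : α => u ⋖ v) w') :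
    w = w' := by
  have key : ∀ v : α, w v = w' v := by
    intro v
    induction' v using WellFoundedLT.induction with v IH
    by_cases hex : ∃ u, u ⋖ v
    · obtain ⟨u, hu, he⟩ := (h v).2.2 hex
      obtain ⟨u', hu', he'⟩ := (h' v).2.2 hex
      have i1 : w u = w' u := IH u hu.lt
      have i2 : w u' = w' u' := IH u' hu'.lt
      have l1 : w' u + 1 ≤ w' v := (h' v).2.1 u hu
      have l2 : w u' + 1 ≤ w v := (h v).2.1 u' hu'
      omega
    · rw [(h v).1 hex, (h' v).1 hex]
  funext v; exact key v

omit [Fintype α] in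
lemma covBy_lt_weight {w : α → ℕ} (h : WeightSpec (fun u v : α => u ⋖ v) w)
    {u v : α} (huv : u ⋖ v) : w u < w v := by
  have := (h v).2.1 u huv
  omega

lemma lt_transGen {u v : α} (h : u < v) : Relation.TransGen (fun a b : α => a ⋖ b) u v := by
  classical
  letI : LocallyFiniteOrder α := Fintype.toLocallyFiniteOrder
  exact transGen_covBy_of_lt h

omit [Fintype α] in
lemma transGen_lt {u v : α} (h : Relation.TransGen (fun a b : α => a ⋖ b) u v) : u < v := by
  induction h with
  | single h => exact h.lt
  | tail _ h ih => exact ih.trans h.lt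

end OrderSide

section Backward
variable {α β : Type} [Fintype α] [Fintype β] [PartialOrder α] [PartialOrder β]

omit [Fintype α] [Fintype β] in
lemma adj_transfer (e : α ≃o β) (a b : α) :
    (underlyingGraph (fun u v : β => u ⋖ v)).Adj (e a) (e b) ↔
      (underlyingGraph (fun u v : α => u ⋖ v)).Adj a b := by
  show (e a ≠ e b ∧ (e a ⋖ e b ∨ e b ⋖ e a)) ↔ (a ≠ b ∧ (a ⋖ b ∨ b ⋖ a))
  have h1 : e a ⋖ e b ↔ a ⋖ b := apply_covBy_apply_iff e
  have h2 : e b ⋖ e a ↔ b ⋖ a := apply_covBy_apply_iff e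
  rw [h1, h2, e.injective.ne_iff]

lemma weightSpec_transfer (e : α ≃o β) (w₂ : β → ℕ)
    (hw₂ : WeightSpec (fun u v : β => u ⋖ v) w₂) :
    WeightSpec (fun u v : α => u ⋖ v) (fun a => w₂ (e a)) := by
  intro v
  have hcov : ∀ a b : α, e a ⋖ e b ↔ a ⋖ b := fun a b => apply_covBy_apply_iff e
  refine ⟨?_, ?_, ?_⟩
  · intro hnex
    apply (hw₂ (e v)).1
    rintro ⟨u', hu'⟩
    apply hnex
    refine ⟨e.symm u', ?_⟩
    have h3 : e (e.symm u') ⋖ e v := by rwa [e.apply_symm_apply]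
    exact (hcov _ v).mp h3
  · intro u hu
    exact (hw₂ (e v)).2.1 (e u) ((hcov u v).mpr hu)
  · intro hex
    have hex' : ∃ u', u' ⋖ e v := by
      obtain ⟨u, hu⟩ := hex; exact ⟨e u, (hcov u v).mpr hu⟩
    obtain ⟨u', hu', he'⟩ := (hw₂ (e v)).2.2 hex'
    refine ⟨e.symm u', ?_, ?_⟩
    · have h3 : e (e.symm u') ⋖ e v := by rwa [e.apply_symm_apply]
      exact (hcov _ v).mp h3
    · show w₂ (e v) = w₂ (e (e.symm u')) + 1
      rw [e.apply_symm_apply]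
      exact he'

lemma chromFun_congr (e : α ≃o β) (w₁ : α → ℕ) (w₂ : β → ℕ)
    (hw₁ : WeightSpec (fun u v : α => u ⋖ v) w₁)
    (hw₂ : WeightSpec (fun u v : β => u ⋖ v) w₂)
    {δ : Type} (K : SimpleGraph δ) :
    chromFun (underlyingGraph (fun u v : α => u ⋖ v)) w₁ K =
      chromFun (underlyingGraph (fun u v : β => u ⋖ v)) w₂ K := by
  classical
  have hw12 : w₁ = fun a => w₂ (e a) := weightSpec_unique hw₁ (weightSpec_transfer e w₂ hw₂)
  set G₁ := underlyingGraph (fun u v : α => u ⋖ v)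
  set G₂ := underlyingGraph (fun u v : β => u ⋖ v)
  let homF : G₁ →g G₂ := ⟨e, fun {a b} h => (adj_transfer e a b).mpr h⟩
  let homB : G₂ →g G₁ := ⟨e.symm, fun {x y} h => by
    apply (adj_transfer e (e.symm x) (e.symm y)).mp
    rwa [e.apply_symm_apply, e.apply_symm_apply]⟩
  have homFcoe : ⇑homF = ⇑e := rfl
  have homBcoe : ⇑homB = ⇑e.symm := rfl
  have hmdB : Finsupp.mapDomain (⇑e.symm) (Finsupp.equivFunOnFinite.symm w₂)
      = Finsupp.equivFunOnFinite.symm w₁ := by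
    ext a
    conv_lhs => rw [← e.symm_apply_apply a]
    rw [Finsupp.mapDomain_apply e.symm.injective]
    simp [hw12]
  have hmdF : Finsupp.mapDomain (⇑e) (Finsupp.equivFunOnFinite.symm w₁)
      = Finsupp.equivFunOnFinite.symm w₂ := by
    ext x
    conv_lhs => rw [← e.apply_symm_apply x]
    rw [Finsupp.mapDomain_apply e.injective]
    simp [hw12]
  funext d
  apply Nat.card_congr
  refine ⟨fun φ => ⟨φ.1.comp homB, ?_⟩, fun ψ => ⟨ψ.1.comp homF, ?_⟩, ?_, ?_⟩
  · rw [SimpleGraph.Hom.coe_comp, homBcoe, Finsupp.mapDomain_comp, hmdB, φ.2]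
  · rw [SimpleGraph.Hom.coe_comp, homFcoe, Finsupp.mapDomain_comp, hmdF, ψ.2]
  · intro φ
    ext1
    apply DFunLike.coe_injective
    funext u
    show φ.1 (e.symm (e u)) = φ.1 u
    rw [e.symm_apply_apply]
  · intro ψ
    ext1
    apply DFunLike.coe_injective
    funext x
    show ψ.1 (e (e.symm x)) = ψ.1 x
    rw [e.apply_symm_apply]

end Backward

/-- For a universal graph series `{H_n}`, the family of invariants
`Z_{H_n}(P) = Y_{H_n}(G⃗_P)` — the `H_n`-chromatic functions of the underlying graph of
the Hasse diagram of `P` (whose arc relation is the covering relation `⋖`), equipped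
with the recursive in-degree weight — is a complete invariant for finite posets. -/
theorem stmt_13 {γ : ℕ → Type} (H : ∀ n, SimpleGraph (γ n)) (hH : IsUniversalSeries H)
    {α β : Type} [Fintype α] [Fintype β] [PartialOrder α] [PartialOrder β]
    (w₁ : α → ℕ) (w₂ : β → ℕ)
    (hw₁ : WeightSpec (fun u v : α => u ⋖ v) w₁)
    (hw₂ : WeightSpec (fun u v : β => u ⋖ v) w₂) :
    (∀ n, chromFun (underlyingGraph (fun u v : α => u ⋖ v)) w₁ (H n) =
        chromFun (underlyingGraph (fun u v : β => u ⋖ v)) w₂ (H n)) ↔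
      Nonempty (α ≃o β) := by

  classical
  constructor
  · intro h
    have h₁ : ∀ u, 1 ≤ w₁ u := weight_pos hw₁
    have h₂ : ∀ v, 1 ≤ w₂ v := weight_pos hw₂
    obtain ⟨φ, hφ⟩ := exists_push_hom (underlyingGraph (fun u v : α => u ⋖ v))
      (underlyingGraph (fun u v : β => u ⋖ v)) w₁ w₂ h₁ h₂ H hH h
    obtain ⟨θ, hθ⟩ := exists_push_hom (underlyingGraph (fun u v : β => u ⋖ v))
      (underlyingGraph (fun u v : α => u ⋖ v)) w₂ w₁ h₂ h₁ H hH (fun n => (h n).symm)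
    obtain ⟨f, g, hgf, hfg, hwf⟩ := exists_weighted_iso h₁ h₂ φ θ hφ hθ
    have hwg : ∀ x, w₁ (g x) = w₂ x := by
      intro x
      have h5 := hwf (g x)
      rw [hfg x] at h5
      exact h5.symm
    have hcovf : ∀ u v : α, u ⋖ v → f u ⋖ f v := by
      intro u v huv
      have hadj : (underlyingGraph (fun u v : α => u ⋖ v)).Adj u v := ⟨huv.ne, Or.inl huv⟩
      obtain ⟨hne, hor⟩ := f.map_adj hadj
      rcases hor with h' | h'
      · exact h'
      · exfalso
        have l1 : w₂ (f v) < w₂ (f u) := covBy_lt_weight hw₂ h'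
        have l2 : w₁ u < w₁ v := covBy_lt_weight hw₁ huv
        rw [hwf u, hwf v] at l1
        omega
    have hcovg : ∀ x y : β, x ⋖ y → g x ⋖ g y := by
      intro x y hxy
      have hadj : (underlyingGraph (fun u v : β => u ⋖ v)).Adj x y := ⟨hxy.ne, Or.inl hxy⟩
      obtain ⟨hne, hor⟩ := g.map_adj hadj
      rcases hor with h' | h'
      · exact h'
      · exfalso
        have l1 : w₁ (g y) < w₁ (g x) := covBy_lt_weight hw₁ h'
        have l2 : w₂ x < w₂ y := covBy_lt_weight hw₂ hxy
        rw [hwg x, hwg y] at l1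
        omega
    have hmap : ∀ {δ ε : Type} (F : δ → ε) (r : δ → δ → Prop) (s : ε → ε → Prop),
        (∀ a b, r a b → s (F a) (F b)) → ∀ u v : δ, Relation.TransGen r u v →
          Relation.TransGen s (F u) (F v) := by
      intro δ ε F r s hc u v h'
      induction h' with
      | single h'' => exact .single (hc _ _ h'')
      | tail _ h'' ih => exact .tail ih (hc _ _ h'')
    have hltf : ∀ u v : α, u < v → f u < f v := fun u v huv =>
      transGen_lt (hmap f _ _ hcovf u v (lt_transGen huv))
    have hltg : ∀ x y : β, x < y → g x < g y := fun x y hxy =>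
      transGen_lt (hmap g _ _ hcovg x y (lt_transGen hxy))
    refine ⟨⟨⟨f, g, hgf, hfg⟩, ?_⟩⟩
    intro a b
    show f a ≤ f b ↔ a ≤ b
    constructor
    · intro hab
      rcases eq_or_lt_of_le hab with heq | hlt
      · have h6 : g (f a) = g (f b) := congrArg g heq
        rw [hgf, hgf] at h6
        exact le_of_eq h6
      · have h6 := hltg _ _ hlt
        rw [hgf, hgf] at h6
        exact h6.le
    · intro hab
      rcases eq_or_lt_of_le hab with heq | hlt
      · rw [heq]
      · exact (hltf _ _ hlt).le
  · rintro ⟨e⟩ n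
    exact chromFun_congr e w₁ w₂ hw₁ hw₂ (H n)
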